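/- Let K = ℚ(√33). On the elliptic curve over K defined by y² = x³ + (28296√33 − 162675)x + 35441118 − 6168312√33, the point (147 − 24√33, 540 − 108√33) is a torsion point of order 18. -/

import Mathlib

/-!
Compute the multiples of `P = (147 - 24√33, 540 - 108√33)` by the chord-and-tangent formulas:
`2P`, `3P = 2P + P`, `6P = 3P + 3P` and `9P = 6P + 3P` are affine points, and `9P` has
`y`-coordinate `0`, so it is `2`-torsion. Hence `18P = 0` while `6P, 9P ≠ 0`, so `P` has order
`18`. The chords and tangents used are non-vertical because `a + b√33 ≠ 0` whenever
`a² ≠ 33 b²`, `33` not being a rational square.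
-/

open WeierstrassCurve Polynomial

namespace WeierstrassCurve.Affine.Point

variable {F : Type*} [Field F] [DecidableEq F] {W : Affine F}
  {x₁ y₁ x₂ y₂ x₃ y₃ ℓ : F} {h₁ : W.Nonsingular x₁ y₁} {h₂ : W.Nonsingular x₂ y₂}

lemma exists_some_add_some_of_slope_eq (hxy : ¬(x₁ = x₂ ∧ y₁ = W.negY x₂ y₂))
    (hℓ : W.slope x₁ x₂ y₁ y₂ = ℓ) (hx : W.addX x₁ x₂ ℓ = x₃) (hy : W.addY x₁ x₂ y₁ ℓ = y₃) :
    ∃ h₃ : W.Nonsingular x₃ y₃, some _ _ h₁ + some _ _ h₂ = some _ _ h₃ := by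
  subst hℓ hx hy
  exact ⟨_, add_some hxy⟩

lemma exists_some_add_some_of_X_ne (hx₁₂ : x₁ ≠ x₂) (hℓ : ℓ * (x₁ - x₂) = y₁ - y₂)
    (hx : W.addX x₁ x₂ ℓ = x₃) (hy : W.addY x₁ x₂ y₁ ℓ = y₃) :
    ∃ h₃ : W.Nonsingular x₃ y₃, some _ _ h₁ + some _ _ h₂ = some _ _ h₃ :=
  exists_some_add_some_of_slope_eq (fun h => hx₁₂ h.1)
    (by rw [slope_of_X_ne hx₁₂, div_eq_iff (sub_ne_zero.mpr hx₁₂), hℓ]) hx hy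

lemma exists_some_add_self_of_Y_ne (hy₁ : y₁ ≠ W.negY x₁ y₁)
    (hℓ : ℓ * (y₁ - W.negY x₁ y₁) = 3 * x₁ ^ 2 + 2 * W.a₂ * x₁ + W.a₄ - W.a₁ * y₁)
    (hx : W.addX x₁ x₁ ℓ = x₃) (hy : W.addY x₁ x₁ y₁ ℓ = y₃) :
    ∃ h₃ : W.Nonsingular x₃ y₃, some _ _ h₁ + some _ _ h₁ = some _ _ h₃ :=
  exists_some_add_some_of_slope_eq (fun h => hy₁ h.2)
    (by rw [slope_of_Y_ne rfl hy₁, div_eq_iff (sub_ne_zero.mpr hy₁), hℓ]) hx hy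

end WeierstrassCurve.Affine.Point

lemma ne_zero_of_eq_add_mul_sqrt {K : Type*} [Field K] [CharZero K] {s : K} {d : ℚ}
    (hs : s ^ 2 = d) {x : K} (a b : ℚ) (hx : x = a + b * s) (hab : a ^ 2 ≠ d * b ^ 2) :
    x ≠ 0 := by
  rintro rfl
  apply hab
  exact_mod_cast (by linear_combination -(a - b * s : K) * hx + (b : K) ^ 2 * hs :
    (a : K) ^ 2 = d * b ^ 2)

namespace QSqrt33

open Affine Point

variable {K : Type*} [Field K] [CharZero K] {s : K}

abbrev curve (s : K) : Affine K := ⟨0, 0, 0, 28296 * s - 162675, 35441118 - 6168312 * s⟩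

lemma ne_zero_of_eq (hs : s ^ 2 = 33) (a b : ℚ) (hab : a ^ 2 ≠ 33 * b ^ 2) {x : K}
    (hx : x = a + b * s) : x ≠ 0 :=
  ne_zero_of_eq_add_mul_sqrt (d := 33) (by exact_mod_cast hs) a b hx (by exact_mod_cast hab)

lemma nonsingular_point (hs : s ^ 2 = 33) :
    (curve s).Nonsingular (147 - 24 * s) (540 - 108 * s) := by
  rw [nonsingular_iff', equation_iff']
  exact ⟨by linear_combination (436752 + 13824 * s) * hs,
    Or.inr <| ne_zero_of_eq hs 1080 (-216) (by norm_num) (by push_cast; ring)⟩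

def point (hs : s ^ 2 = 33) : (curve s).Point := some _ _ (nonsingular_point hs)

variable [DecidableEq K]

lemma two_nsmul_point (hs : s ^ 2 = 33) :
    ∃ h : (curve s).Nonsingular (327 - 60 * s) (6264 - 1080 * s), 2 • point hs = some _ _ h := by
  rw [two_nsmul]
  refine exists_some_add_self_of_Y_ne (ℓ := -18 + 3 * s)
    (sub_ne_zero.mp <| ne_zero_of_eq hs 1080 (-216) (by norm_num) ?_) ?_ ?_ ?_
  · simp only [negY]; push_cast; ring
  · simp only [negY]; linear_combination -2376 * hs
  · simp only [addX]; linear_combination 9 * hs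
  · simp only [addY, negAddY, addX, negY]; linear_combination (270 - 27 * s) * hs

lemma three_nsmul_point (hs : s ^ 2 = 33) :
    ∃ h : (curve s).Nonsingular (-33 + 12 * s) (5184 - 864 * s), 3 • point hs = some _ _ h := by
  obtain ⟨h₂, e₂⟩ := two_nsmul_point hs
  rw [succ_nsmul, e₂]
  refine exists_some_add_some_of_X_ne (ℓ := 12 - 3 * s)
    (sub_ne_zero.mp <| ne_zero_of_eq hs 180 (-36) (by norm_num) (by push_cast; ring)) ?_ ?_ ?_
  · linear_combination 108 * hs
  · simp only [addX]; linear_combination 9 * hs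
  · simp only [addY, negAddY, addX, negY]; linear_combination (108 + 27 * s) * hs

lemma six_nsmul_point (hs : s ^ 2 = 33) :
    ∃ h : (curve s).Nonsingular (207 - 36 * s) (-1296 + 240 * s), 6 • point hs = some _ _ h := by
  obtain ⟨h₃, e₃⟩ := three_nsmul_point hs
  rw [show 6 = 3 + 3 from rfl, add_nsmul, e₃]
  refine exists_some_add_self_of_Y_ne (ℓ := -3 + 2 * s)
    (sub_ne_zero.mp <| ne_zero_of_eq hs 10368 (-1728) (by norm_num) ?_) ?_ ?_ ?_
  · simp only [negY]; push_cast; ring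
  · simp only [negY]; linear_combination -3888 * hs
  · simp only [addX]; linear_combination 4 * hs
  · simp only [addY, negAddY, addX, negY]; linear_combination (108 - 8 * s) * hs

lemma nine_nsmul_point (hs : s ^ 2 = 33) :
    ∃ h : (curve s).Nonsingular (285 / 2 - 57 / 2 * s) 0, 9 • point hs = some _ _ h := by
  obtain ⟨h₃, e₃⟩ := three_nsmul_point hs
  obtain ⟨h₆, e₆⟩ := six_nsmul_point hs
  rw [show 9 = 6 + 3 from rfl, add_nsmul, e₃, e₆]
  refine exists_some_add_some_of_X_ne (ℓ := -21 / 2 + 5 / 2 * s)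
    (sub_ne_zero.mp <| ne_zero_of_eq hs 240 (-48) (by norm_num) (by push_cast; ring)) ?_ ?_ ?_
  · linear_combination -120 * hs
  · simp only [addX]; linear_combination 25 / 4 * hs
  · simp only [addY, negAddY, addX, negY]; linear_combination (375 / 8 - 125 / 8 * s) * hs

end QSqrt33

open Classical in
theorem stmt_8_general {K : Type*} [Field K] [Algebra ℚ K] (s : K) (hs : s ^ 2 = 33) :
    ∃ h : WeierstrassCurve.Affine.Nonsingular (⟨0, 0, 0, 28296 * s - 162675, 35441118 - 6168312 * s⟩ : WeierstrassCurve.Affine K) (147 - 24 * s) (540 - 108 * s),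
      addOrderOf (WeierstrassCurve.Affine.Point.some _ _ h) = 18 := by
  have : CharZero K := charZero_of_injective_algebraMap (algebraMap ℚ K).injective
  obtain ⟨h₆, e₆⟩ := QSqrt33.six_nsmul_point hs
  obtain ⟨h₉, e₉⟩ := QSqrt33.nine_nsmul_point hs
  refine ⟨QSqrt33.nonsingular_point hs,
    addOrderOf_eq_of_nsmul_and_div_prime_nsmul (by norm_num) ?_ ?_⟩
  · change 18 • QSqrt33.point hs = 0
    rw [show 18 = 9 + 9 from rfl, add_nsmul, e₉]
    exact Affine.Point.add_self_of_Y_eq (by simp only [Affine.negY]; ring)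
  · intro p hp hp18
    obtain rfl | rfl : p = 2 ∨ p = 3 := by
      rcases (Nat.Prime.dvd_mul hp).mp (show p ∣ 2 * 3 ^ 2 from hp18) with h | h
      · exact Or.inl ((Nat.prime_dvd_prime_iff_eq hp Nat.prime_two).mp h)
      · exact Or.inr ((Nat.prime_dvd_prime_iff_eq hp Nat.prime_three).mp (hp.dvd_of_dvd_pow h))
    · exact e₉ ▸ Affine.Point.some_ne_zero h₉
    · exact e₆ ▸ Affine.Point.some_ne_zero h₆

open Classical in
/-- K = ℚ(√(33)); the given point is a torsion point of order 18. -/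
theorem stmt_8 {K : Type*} [Field K] [Algebra ℚ K] (s : K) (hs : s ^ 2 = 33)
    (hK : ∀ x : K, ∃ a b : ℚ, x = algebraMap ℚ K a + algebraMap ℚ K b * s) :
    ∃ h : WeierstrassCurve.Affine.Nonsingular (⟨0, 0, 0, 28296 * s - 162675, 35441118 - 6168312 * s⟩ : WeierstrassCurve.Affine K) (147 - 24 * s) (540 - 108 * s),
      addOrderOf (WeierstrassCurve.Affine.Point.some _ _ h) = 18 :=
  stmt_8_general s hs
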